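/- Suppose a, b, c, d, w₀ ∈ ℂ, θ₀ ∈ ℝ, α ∈ ℝ \ {0}, ad − bc ≠ 0, a ≠ 0, c ≠ 0, and the three identities hold: (1) cd·e^{2πiα} = c·e^{2πiα}(d·e^{iθ₀} − c·w₀); (2) ad·e^{2πiα} + bc = a(d·e^{iθ₀} − c·w₀) − c·e^{2πiα}(a·w₀ − b·e^{iθ₀}); (3) −ab = a(a·w₀ − b·e^{iθ₀}). Then e^{iθ₀} = 1 and e^{2πiα} = 1 (hence α ∈ ℤ). -/
import Mathlib


open Complex

/-- If the monodromy identities (1),(2),(3) hold with `ad − bc ≠ 0`, `a ≠ 0`, `c ≠ 0`,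
then `e^{iθ₀} = 1` and `e^{2πiα} = 1` (hence `α ∈ ℤ`). -/
theorem monodromy_identities (a b c d w₀ : ℂ) (θ₀ α : ℝ) (hα : α ≠ 0)
    (hdet : a * d - b * c ≠ 0) (ha : a ≠ 0) (hc : c ≠ 0)
    (e1 : c * d * Complex.exp (2 * Real.pi * I * α) =
      c * Complex.exp (2 * Real.pi * I * α) * (d * Complex.exp (I * θ₀) - c * w₀))
    (e2 : a * d * Complex.exp (2 * Real.pi * I * α) + b * c =
      a * (d * Complex.exp (I * θ₀) - c * w₀) -
        c * Complex.exp (2 * Real.pi * I * α) * (a * w₀ - b * Complex.exp (I * θ₀)))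
    (e3 : -(a * b) = a * (a * w₀ - b * Complex.exp (I * θ₀))) :
    Complex.exp (I * θ₀) = 1 ∧ Complex.exp (2 * Real.pi * I * α) = 1 ∧
      ∃ n : ℤ, α = (n : ℝ) := by
  set E := Complex.exp (2 * Real.pi * I * α) with hE
  set T := Complex.exp (I * θ₀) with hT
  have hE0 : E ≠ 0 := Complex.exp_ne_zero _
  -- From e1: d = d*T - c*w₀
  have h1 : c * w₀ = d * (T - 1) := by
    have : c * E * d = c * E * (d * T - c * w₀) := by linear_combination e1
    have h := mul_left_cancel₀ (mul_ne_zero hc hE0) this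
    linear_combination h
  -- From e3: a*w₀ = b*(T-1)
  have h3 : a * w₀ = b * (T - 1) := by
    have : a * (-b) = a * (a * w₀ - b * T) := by linear_combination e3
    have h := mul_left_cancel₀ ha this
    linear_combination -h
  -- Substitute into e2
  have hE1 : E = 1 := by
    have key : (a * d - b * c) * (E - 1) = 0 := by
      linear_combination e2 - a * h1 - c * E * h3
    rcases mul_eq_zero.1 key with h | h
    · exact absurd h hdet
    · exact sub_eq_zero.1 h
  have hT1 : T = 1 := by
    have key : (a * d - b * c) * (T - 1) = 0 := by
      linear_combination c * h3 - a * h1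
    have := (mul_eq_zero.1 key).resolve_left hdet
    exact sub_eq_zero.1 this
  refine ⟨hT1, hE1, ?_⟩
  rw [hE, Complex.exp_eq_one_iff] at hE1
  obtain ⟨n, hn⟩ := hE1
  refine ⟨n, ?_⟩
  have hI : (2 : ℂ) * Real.pi * I ≠ 0 := by
    simp [Real.pi_ne_zero, Complex.I_ne_zero]
  have : (α : ℂ) = (n : ℂ) := by
    have h2 : (2 : ℂ) * Real.pi * I * α = 2 * Real.pi * I * n := by
      linear_combination hn
    exact mul_left_cancel₀ hI h2
  exact_mod_cast this
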